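/- Let Σ be a nonempty finite type and P : Set (ℕ → Σ) a boolean property. Then P is co-safe if and only if there exists a function v : List Σ → Bool such that: for all finite traces s, t with s a prefix of t, v s = true implies v t = true; and for every infinite trace f, f ∈ P ↔ (∃ n : ℕ, v (f↾n) = true). -/
import Mathlib


/-- The length-`n` prefix of an infinite trace `f`. -/
def pref {A : Type*} (f : ℕ → A) (n : ℕ) : List A := List.ofFn (fun i : Fin n => f i.1)

/-- The infinite trace obtained by prepending the finite trace `s` to the infinite trace `f`. -/
def ext {A : Type*} (s : List A) (f : ℕ → A) : ℕ → A :=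
  fun n => if h : n < s.length then s.get ⟨n, h⟩ else f (n - s.length)

/-- `s` positively determines `P`. -/
def PosDet {A : Type*} (P : Set (ℕ → A)) (s : List A) : Prop := ∀ f : ℕ → A, ext s f ∈ P

/-- `P` is a co-safety property. -/
def CoSafe {A : Type*} (P : Set (ℕ → A)) : Prop :=
  ∀ f : ℕ → A, f ∈ P → ∃ n : ℕ, PosDet P (pref f n)

lemma ext_append {A : Type*} (s u : List A) (f : ℕ → A) :
    ext (s ++ u) f = ext s (ext u f) := by
  funext n
  simp only [ext, List.length_append]
  by_cases h1 : n < s.length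
  · rw [dif_pos (by omega), dif_pos h1]
    simp only [List.get_eq_getElem]
    rw [List.getElem_append_left h1]
  · rw [dif_neg h1]
    by_cases h2 : n < s.length + u.length
    · rw [dif_pos h2, dif_pos (by omega)]
      simp only [List.get_eq_getElem]
      rw [List.getElem_append_right (by omega)]
    · rw [dif_neg h2, dif_neg (by omega)]
      congr 1
      omega

lemma ext_pref {A : Type*} (f : ℕ → A) (n : ℕ) :
    ext (pref f n) (fun k => f (n + k)) = f := by
  funext m
  simp only [ext, pref, List.length_ofFn]
  by_cases h : m < n
  · rw [dif_pos h]; simp [List.get_ofFn]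
  · rw [dif_neg h]; congr 1; omega

lemma pref_ext {A : Type*} (s : List A) (g : ℕ → A) :
    pref (ext s g) s.length = s := by
  apply List.ext_getElem
  · simp [pref]
  · intro i h1 h2
    simp only [pref, List.getElem_ofFn, ext]
    simp only [List.get_eq_getElem]
    rw [dif_pos h2]

theorem cosafe_iff_verdict {A : Type*} [Fintype A] [Nonempty A] (P : Set (ℕ → A)) :
    CoSafe P ↔
    (∃ v : List A → Bool,
      (∀ s t : List A, s <+: t → v s = true → v t = true) ∧
      ∀ f : ℕ → A, f ∈ P ↔ (∃ n : ℕ, v (pref f n) = true)) := by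
  classical
  constructor
  · intro hcs
    refine ⟨fun s => decide (PosDet P s), ?_, ?_⟩
    · intro s t hst hs
      rw [decide_eq_true_iff] at hs ⊢
      obtain ⟨u, rfl⟩ := hst
      intro f
      rw [ext_append]
      exact hs _
    · intro f
      constructor
      · intro hf
        obtain ⟨n, hn⟩ := hcs f hf
        exact ⟨n, decide_eq_true_iff.mpr hn⟩
      · rintro ⟨n, hn⟩
        rw [decide_eq_true_iff] at hn
        have := hn (fun k => f (n + k))
        rwa [ext_pref] at this
  · rintro ⟨v, hmono, hP⟩
    intro f hf
    obtain ⟨n, hn⟩ := (hP f).mp hf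
    refine ⟨n, fun g => ?_⟩
    rw [hP]
    refine ⟨n, ?_⟩
    have hlen : (pref f n).length = n := by simp [pref]
    have := pref_ext (pref f n) g
    rw [hlen] at this
    rw [this]
    exact hn
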